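/- For a functor G: N^r → Vect_K, G has finite dimensional values if and only if G/rad(G) has finite dimensional values. -/

import Mathlib

/-!
Induct along the well-founded order of `ℕ^r`. If `G` is finite dimensional strictly below `v`,
then `rad(G)(v)` is a sum of finitely many (there are finitely many `u < v`) finite dimensional
images, and `G(v)` is an extension of `G(v)/rad(G)(v)` by `rad(G)(v)`.
-/

open CategoryTheory CategoryTheory.Limits

set_option synthInstance.maxHeartbeats 1000000
set_option maxHeartbeats 1000000

attribute [local instance 2000] Preorder.smallCategory

/-- The poset of `r`-tuples of non-negative rational numbers, with the componentwise order. -/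
abbrev Qr (r : ℕ) := Fin r → ℚ≥0

/-- The poset of `r`-tuples of natural numbers, with the componentwise order. -/
abbrev Nr (r : ℕ) := Fin r → ℕ

/-- `bfloor α v = join {w ∈ ℕ^r | α w ≤ v}`, computed componentwise as `⌊vᵢ/α⌋`. -/
def bfloor (α : ℚ≥0) {r : ℕ} (v : Qr r) : Nr r := fun i => Nat.floor ((v i : ℚ) / (α : ℚ))

/-- The embedding `α : ℕ^r → ℚ≥0^r`, `w ↦ α w`. -/
def embQ (α : ℚ≥0) {r : ℕ} (w : Nr r) : Qr r := fun i => α * (w i : ℚ≥0)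

theorem bfloor_mono (α : ℚ≥0) (r : ℕ) : Monotone (bfloor α (r := r)) := by
  intro v w h i
  exact Nat.floor_mono (by gcongr; exact_mod_cast h i)

theorem embQ_mono (α : ℚ≥0) (r : ℕ) : Monotone (embQ α (r := r)) := by
  intro v w h i
  dsimp [embQ]
  gcongr
  exact_mod_cast h i

/-- A functor `G : ℚ≥0^r ⥤ C` is `α`-tame if `G(α bα v ≤ v)` is an isomorphism for every `v`,
i.e. `G` is (isomorphic to) the left Kan extension along `α : ℕ^r → ℚ≥0^r` of its restriction;
equivalently, `G` is constant on the fundamental domains of `α`. -/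
def IsAlphaTame {C : Type*} [Category C] (α : ℚ≥0) {r : ℕ} (G : Qr r ⥤ C) : Prop :=
  ∀ (v : Qr r) (h : embQ α (bfloor α v) ≤ v), IsIso (G.map (homOfLE h))

/-- A functor is tame if it is `α`-tame for some positive rational `α`. -/
def IsTame {C : Type*} [Category C] {r : ℕ} (G : Qr r ⥤ C) : Prop :=
  ∃ α : ℚ≥0, 0 < α ∧ IsAlphaTame α G

/-- The radical of `G : ℕ^r ⥤ Vect_K` at `v`: the sum of the images of `G(u < v)` over all
`u < v`. -/
noncomputable def radSub (K : Type) [Field K] {r : ℕ} (G : Nr r ⥤ ModuleCat K) (v : Nr r) :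
    Submodule K (G.obj v) :=
  ⨆ (u : Nr r) (h : u < v), LinearMap.range (G.map (homOfLE h.le)).hom

theorem finiteDimensional_radSub {K : Type} [Field K] {r : ℕ} (G : Nr r ⥤ ModuleCat K) (v : Nr r)
    (hG : ∀ u < v, FiniteDimensional K (G.obj u)) : FiniteDimensional K (radSub K G v) := by
  rw [radSub, iSup_subtype']
  have : Finite {u : Nr r // u < v} := (Set.finite_Iio v).to_subtype
  have (u : {u : Nr r // u < v}) :
      FiniteDimensional K (LinearMap.range (G.map (homOfLE u.2.le)).hom) :=
    have := hG u.1 u.2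
    LinearMap.finiteDimensional_range _
  infer_instance

/-- `G : ℕ^r ⥤ Vect_K` has finite dimensional values iff `G/rad(G)` has finite dimensional
values. -/
theorem finiteDimensional_iff_quotient_radical (K : Type) [Field K] (r : ℕ)
    (G : Nr r ⥤ ModuleCat K) :
    (∀ v : Nr r, FiniteDimensional K (G.obj v)) ↔
      (∀ v : Nr r, FiniteDimensional K (G.obj v ⧸ radSub K G v)) := by
  refine ⟨fun hG v => have := hG v; inferInstance, fun hquot v => ?_⟩
  induction v using WellFoundedLT.induction with
  | _ v ih =>
    have := finiteDimensional_radSub G v ih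
    have := hquot v
    exact Module.Finite.of_submodule_quotient (radSub K G v)
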